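/- Let R = K[[X,Y,U,V]]/(XY − UV) and M' = coker(R → R^4, 1 ↦ (x,y,u,v)). Then M' is a torsion-free R-module; in particular x is a non-zerodivisor on M'. -/

import Mathlib

/-!
`M'` embeds into `R⁴` through `a ↦ a₀ • (x, y, u, v) - x • a`: if `a₀ • (x, y, u, v) = x • a`,
then `a₀ y ∈ xR`, so `a₀ = t x` because `y` is a non-zerodivisor on `R/xR`, and cancelling the
non-zerodivisor `x` gives `a = t • (x, y, u, v)`. A submodule of a free module is torsion-free.
Both regularity facts are lifted to `K⟦X, Y, U, V⟧`, where substituting `X = 0` shows that `X` is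
prime and turns `XY - UV` into `-UV`.
-/

open CategoryTheory

/-- `R = K[[X,Y,U,V]]/(XY - UV)`. -/
noncomputable abbrev psHypersurface (K : Type) [Field K] : Type :=
  MvPowerSeries (Fin 4) K ⧸
    Ideal.span {(MvPowerSeries.X 0 : MvPowerSeries (Fin 4) K) * MvPowerSeries.X 1 -
      MvPowerSeries.X 2 * MvPowerSeries.X 3}

/-- `M' = coker(R → R^4, 1 ↦ (x,y,u,v)) = R^4/R·(x e_1 + y e_2 + u e_3 + v e_4)`. -/
noncomputable abbrev Mprime (K : Type) [Field K] (x y u v : psHypersurface K) : Type :=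
  (Fin 4 → psHypersurface K) ⧸ Submodule.span (psHypersurface K) {![x, y, u, v]}

namespace Submodule

theorem torsion_eq_bot_of_isTorsionFree {R M : Type*} [CommRing R] [AddCommGroup M] [Module R M]
    [Module.IsTorsionFree R M] : torsion R M = ⊥ := by
  rw [eq_bot_iff]
  rintro m ⟨⟨r, hr⟩, hrm⟩
  exact (isRegular_iff_mem_nonZeroDivisors.mpr hr).smul_eq_zero_iff_right.mp hrm

end Submodule

section CokernelOfVector

open Submodule

variable {R ι : Type*} [CommRing R] {w : ι → R} {i j : ι}

theorem ker_proj_smulRight_sub_smul_eq_span (hi : IsRegular (w i))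
    (hj : ∀ a, w i ∣ a * w j → w i ∣ a) :
    LinearMap.ker ((LinearMap.proj i).smulRight w - w i • LinearMap.id) = span R {w} := by
  refine le_antisymm (fun a ha => ?_) ?_
  · have ha' : ∀ k, a i * w k = w i * a k := fun k => by
      simpa [sub_eq_zero] using congrFun (LinearMap.mem_ker.mp ha) k
    obtain ⟨t, ht⟩ := hj (a i) ⟨a j, ha' j⟩
    refine mem_span_singleton.mpr ⟨t, funext fun k => hi.left ?_⟩
    simp only [Pi.smul_apply, smul_eq_mul]
    linear_combination ha' k - w k * ht
  · rw [span_le, Set.singleton_subset_iff, SetLike.mem_coe, LinearMap.mem_ker]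
    simp

theorem isTorsionFree_quotient_span_singleton (hi : IsRegular (w i))
    (hj : ∀ a, w i ∣ a * w j → w i ∣ a) :
    Module.IsTorsionFree R ((ι → R) ⧸ span R {w}) := by
  have hker := ker_proj_smulRight_sub_smul_eq_span hi hj
  let φ := (span R {w}).liftQ _ hker.ge
  exact Function.Injective.moduleIsTorsionFree φ
    (LinearMap.ker_eq_bot.mp (ker_liftQ_eq_bot' _ _ hker.symm)) (map_smul φ)

end CokernelOfVector

namespace MvPowerSeries

variable {σ R : Type*} [CommRing R]

-- The substitution `X i ↦ 0`, factored as `R⟦σ⟧ → R⟦σ ∖ {i}⟧ → R⟦σ⟧`.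
noncomputable def killX (i : σ) : MvPowerSeries σ R →ₐ[R] MvPowerSeries σ R :=
  (rename (Function.Embedding.subtype (· ≠ i))).comp
    (killCompl (Function.Embedding.subtype (· ≠ i)))

theorem coeff_killX_of_eq_zero {i : σ} {m : σ →₀ ℕ} (hm : m i = 0) (g : MvPowerSeries σ R) :
    coeff m (killX i g) = coeff m g := by
  obtain ⟨n, rfl⟩ : m ∈ Set.range (Finsupp.embDomain (Function.Embedding.subtype (· ≠ i))) := by
    rw [Finsupp.mem_range_embDomain_iff]
    intro j hj
    exact ⟨⟨j, fun h => Finsupp.mem_support_iff.mp hj (h ▸ hm)⟩, rfl⟩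
  rw [killX, AlgHom.comp_apply, coeff_embDomain_rename, coeff_killCompl]

theorem killX_X_self (i : σ) : killX i (X i : MvPowerSeries σ R) = 0 := by
  simp [killX, killCompl_X_eq_zero]

theorem killX_X_of_ne {i j : σ} (h : j ≠ i) : killX i (X j : MvPowerSeries σ R) = X j := by
  simpa [killX] using congrArg (rename (Function.Embedding.subtype (· ≠ i)))
    (killCompl_X (R := R) (e := .subtype (· ≠ i)) ⟨j, h⟩)

theorem X_dvd_sub_killX (i : σ) (g : MvPowerSeries σ R) : X i ∣ g - killX i g := by
  rw [X_dvd_iff]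
  intro m hm
  rw [map_sub, coeff_killX_of_eq_zero hm, sub_self]

theorem X_dvd_iff_killX_eq_zero {i : σ} {g : MvPowerSeries σ R} : X i ∣ g ↔ killX i g = 0 := by
  constructor
  · rintro ⟨h, rfl⟩
    rw [map_mul, killX_X_self, zero_mul]
  · intro hg
    simpa [hg] using X_dvd_sub_killX i g

theorem X_ne_zero [Nontrivial R] (i : σ) : (X i : MvPowerSeries σ R) ≠ 0 :=
  nonZeroDivisors.ne_zero X_mem_nonzeroDivisors

theorem not_X_dvd_X_of_ne [Nontrivial R] {i j : σ} (h : j ≠ i) :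
    ¬ (X i : MvPowerSeries σ R) ∣ X j := by
  rw [X_dvd_iff_killX_eq_zero, killX_X_of_ne h]
  exact X_ne_zero j

theorem X_prime [IsDomain R] (i : σ) : Prime (X i : MvPowerSeries σ R) := by
  refine ⟨X_ne_zero i, fun hunit => ?_, fun g h hgh => ?_⟩
  · simpa using X_dvd_iff_killX_eq_zero.mp (hunit.dvd : X i ∣ 1)
  · simpa only [X_dvd_iff_killX_eq_zero, map_mul, mul_eq_zero] using hgh

variable [IsDomain R]

theorem dvd_of_dvd_X_zero_mul {G : MvPowerSeries (Fin 4) R}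
    (h : X 0 * X 1 - X 2 * X 3 ∣ X 0 * G) : X 0 * X 1 - X 2 * X 3 ∣ G := by
  obtain ⟨H, hH⟩ := h
  have hf : ¬ X 0 ∣ (X 0 * X 1 - X 2 * X 3 : MvPowerSeries (Fin 4) R) := by
    simp [X_dvd_iff_killX_eq_zero, killX_X_self, killX_X_of_ne, X_ne_zero]
  obtain ⟨H', rfl⟩ := ((X_prime 0).dvd_or_dvd ⟨G, hH.symm⟩).resolve_left hf
  exact ⟨H', mul_left_cancel₀ (X_ne_zero 0) (by linear_combination hH)⟩

theorem mem_span_of_mul_X_one_mem_span {A : MvPowerSeries (Fin 4) R}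
    (h : A * X 1 ∈ Ideal.span {X 0, X 0 * X 1 - X 2 * X 3}) :
    A ∈ Ideal.span {X 0, X 0 * X 1 - X 2 * X 3} := by
  obtain ⟨T, Q, hTQ⟩ := Ideal.mem_span_pair.mp h
  have hkill : killX 0 A * X 1 = -(killX 0 Q * (X 2 * X 3)) := by
    simpa [killX_X_self, killX_X_of_ne] using (congrArg (killX 0) hTQ).symm
  obtain ⟨A₂, hA₂⟩ : X 2 ∣ killX 0 A := by
    refine ((X_prime 2).dvd_or_dvd (b := X 1) ⟨-(killX 0 Q * X 3), ?_⟩).resolve_right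
      (not_X_dvd_X_of_ne (by decide))
    linear_combination hkill
  obtain ⟨A₃, rfl⟩ : X 3 ∣ A₂ := by
    refine ((X_prime 3).dvd_or_dvd (b := X 1)
      ⟨-(killX 0 Q), mul_left_cancel₀ (X_ne_zero 2) ?_⟩).resolve_right
      (not_X_dvd_X_of_ne (by decide))
    linear_combination hkill - X 1 * hA₂
  obtain ⟨A₀, hA₀⟩ := X_dvd_sub_killX 0 A
  exact Ideal.mem_span_pair.mpr ⟨A₀ + X 1 * A₃, -A₃, by linear_combination -hA₀ - hA₂⟩

end MvPowerSeries

namespace psHypersurface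

open MvPowerSeries Ideal.Quotient

variable {K : Type} [Field K]

theorem isRegular_X_zero : IsRegular (mk _ (X 0) : psHypersurface K) := by
  rw [isRegular_iff_mem_nonZeroDivisors, mem_nonZeroDivisors_iff_right]
  intro g hg
  obtain ⟨G, rfl⟩ := mk_surjective g
  rw [← map_mul, eq_zero_iff_mem, Ideal.mem_span_singleton, mul_comm G] at hg
  rw [eq_zero_iff_mem, Ideal.mem_span_singleton]
  exact dvd_of_dvd_X_zero_mul hg

theorem X_zero_dvd_of_dvd_mul_X_one {a : psHypersurface K}
    (h : mk _ (X 0) ∣ a * mk _ (X 1)) : mk _ (X 0) ∣ a := by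
  obtain ⟨A, rfl⟩ := mk_surjective a
  obtain ⟨b, hb⟩ := h
  obtain ⟨B, rfl⟩ := mk_surjective b
  obtain ⟨P, hP⟩ : X 0 * X 1 - X 2 * X 3 ∣ A * X 1 - X 0 * B := by
    rwa [← map_mul, ← map_mul, Ideal.Quotient.eq, Ideal.mem_span_singleton] at hb
  obtain ⟨T, Q, hTQ⟩ := Ideal.mem_span_pair.mp <| mem_span_of_mul_X_one_mem_span (A := A) <|
    Ideal.mem_span_pair.mpr ⟨B, P, by linear_combination -hP⟩
  have hf : (mk _ (X 0 * X 1 - X 2 * X 3) : psHypersurface K) = 0 :=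
    eq_zero_iff_mem.mpr (Ideal.mem_span_singleton_self _)
  refine ⟨mk _ T, ?_⟩
  rw [← hTQ, map_add, map_mul, map_mul, hf]
  ring

end psHypersurface

theorem Mprime_torsionFree_general (K : Type) [Field K]
    (x y u v : psHypersurface K)
    (hx : x = Ideal.Quotient.mk _ (MvPowerSeries.X 0))
    (hy : y = Ideal.Quotient.mk _ (MvPowerSeries.X 1)) :
    Submodule.torsion (psHypersurface K) (Mprime K x y u v) = ⊥ ∧
      IsSMulRegular (Mprime K x y u v) x := by
  subst hx hy
  have := isTorsionFree_quotient_span_singleton (w := ![_, _, u, v]) (i := 0) (j := 1)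
    psHypersurface.isRegular_X_zero fun _ => psHypersurface.X_zero_dvd_of_dvd_mul_X_one
  exact ⟨Submodule.torsion_eq_bot_of_isTorsionFree, psHypersurface.isRegular_X_zero.isSMulRegular⟩

/-- For `R = K[[X,Y,U,V]]/(XY-UV)` and `M' = coker(R → R^4, 1 ↦ (x,y,u,v))`,
`M'` is torsion-free; in particular `x` is a non-zerodivisor on `M'`. -/
theorem Mprime_torsionFree (K : Type) [Field K]
    (x y u v : psHypersurface K)
    (hx : x = Ideal.Quotient.mk _ (MvPowerSeries.X 0))
    (hy : y = Ideal.Quotient.mk _ (MvPowerSeries.X 1))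
    (hu : u = Ideal.Quotient.mk _ (MvPowerSeries.X 2))
    (hv : v = Ideal.Quotient.mk _ (MvPowerSeries.X 3)) :
    Submodule.torsion (psHypersurface K) (Mprime K x y u v) = ⊥ ∧
      IsSMulRegular (Mprime K x y u v) x :=
  Mprime_torsionFree_general K x y u v hx hy
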